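/- arXiv:math/0512535 — 2 statements merged into one kernel-verified Lean document; each statement's English description precedes it below -/
import Mathlib

section
/- Let (F_k)_{k ≥ 0} be a filtration on a probability space and let B⁰, B¹, …, B^{K−1} be events such that B^k is F_{k+2}-measurable and P(B^k | F_k) ≤ δ almost surely, for each k. Then for every integer j ≥ 0, P( #{0 ≤ k ≤ K−1 : B^k occurs} > 2j ) ≤ 4·(⌈K/2⌉·δ)^j. In particular, the even-indexed events (and likewise the odd-indexed events) are stochastically dominated by an i.i.d. sequence of δ-Bernoulli variables. -/
open MeasureTheory ProbabilityTheory Filter Set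

/-- `Log x = max (log x) 1`, as in the paper. -/
noncomputable def Log (x : ℝ) : ℝ := max (Real.log x) 1

/-- Step distribution of simple random walk on `ℤ²`. -/
noncomputable def srwProb (d : ℤ × ℤ) : ℝ :=
  if d = (1, 0) ∨ d = (-1, 0) ∨ d = (0, 1) ∨ d = (0, -1) then 1 / 4 else 0

/-- Step distribution of an excited ("cookie") step with drift `ε` to the right. -/
noncomputable def excProb (ε : ℝ) (d : ℤ × ℤ) : ℝ :=
  if d = (1, 0) then 1 / 4 + ε
  else if d = (-1, 0) then 1 / 4 - ε
  else if d = (0, 1) ∨ d = (0, -1) then 1 / 4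
  else 0

/-- The natural filtration of a process `X`. -/
def natFilt {Ω α : Type*} [MeasurableSpace Ω] [MeasurableSpace α]
    (X : ℕ → Ω → α) (n : ℕ) : MeasurableSpace Ω :=
  ⨆ k ∈ Finset.range (n + 1), MeasurableSpace.comap (X k) inferInstance

open Classical in
/-- `E` is an `ε`-excited random walk started from `(V, w)`, under the probability
measure `μ`: conditionally on `E 0, …, E n`, if `E n` is a fresh site (not in `V` nor
in the past path) the increment has the `ε`-drifted law `excProb ε`, otherwise it is
uniform on the four neighbours. -/
structure IsExcitedRW {Ω : Type*} [MeasurableSpace Ω] (μ : Measure Ω)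
    (ε : ℝ) (V : Set (ℤ × ℤ)) (w : ℤ × ℤ) (E : ℕ → Ω → ℤ × ℤ) : Prop where
  meas : ∀ n, Measurable (E n)
  start : ∀ ω, E 0 ω = w
  step : ∀ n (d : ℤ × ℤ),
    (μ[Set.indicator {ω | E (n + 1) ω - E n ω = d} (fun _ => (1 : ℝ)) | natFilt E n])
      =ᵐ[μ] fun ω =>
        if E n ω ∈ V ∨ ∃ k < n, E k ω = E n ω then srwProb d else excProb ε d

/-- `R` is a simple random walk on `ℤ²` started at `w`, under `μ`. -/
structure IsSRW {Ω : Type*} [MeasurableSpace Ω] (μ : Measure Ω)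
    (w : ℤ × ℤ) (R : ℕ → Ω → ℤ × ℤ) : Prop where
  meas : ∀ n, Measurable (R n)
  start : ∀ ω, R 0 ω = w
  step : ∀ n (d : ℤ × ℤ),
    (μ[Set.indicator {ω | R (n + 1) ω - R n ω = d} (fun _ => (1 : ℝ)) | natFilt R n])
      =ᵐ[μ] fun _ => srwProb d

/-- `R` has a tan point at time `j` relative to time `i` : the path `R [i, j-1]`
avoids the half line `R j + ℕ × {0}`. -/
def TanPoint (R : ℕ → ℤ × ℤ) (i j : ℕ) : Prop :=
  ∀ k, i ≤ k → k < j → ∀ t : ℕ, R k ≠ R j + ((t : ℤ), 0)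

open Classical in
/-- The number of times `t ∈ [j, j + m]` which are tan points of `R` relative to `i`. -/
noncomputable def tanCount (R : ℕ → ℤ × ℤ) (i j m : ℕ) : ℕ :=
  ((Finset.Icc j (j + m)).filter fun t => TanPoint R i t).card

/-- `max_{j ≤ i} (E j)₁`. -/
noncomputable def maxUpTo {Ω : Type*} (E : ℕ → Ω → ℤ × ℤ) (i : ℕ) (ω : Ω) : ℤ :=
  (Finset.range (i + 1)).sup' (Finset.nonempty_range_iff.mpr (Nat.succ_ne_zero i))
    fun j => (E j ω).1

section Aux

variable {Ω : Type*} {m0 : MeasurableSpace Ω} (μ : Measure Ω) [IsProbabilityMeasure μ]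
  (F : Filtration ℕ m0)

lemma aux_cond_step {δ : ℝ} (hδ0 : 0 ≤ δ) {k : ℕ} {Bk : Set Ω}
    (hB : MeasurableSet[F (k + 2)] Bk)
    (hc : (μ[Set.indicator Bk (fun _ => (1 : ℝ)) | F k]) ≤ᵐ[μ] fun _ => δ)
    {S : Set Ω} (hS : MeasurableSet[F k] S) :
    μ (S ∩ Bk) ≤ ENNReal.ofReal δ * μ S := by
  have hBm : MeasurableSet Bk := F.le _ _ hB
  have hSm : MeasurableSet S := F.le _ _ hS
  have hint : Integrable (Set.indicator Bk (fun _ => (1 : ℝ))) μ :=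
    (integrable_const (1 : ℝ)).indicator hBm
  have h1 : ∫ ω in S, (μ[Set.indicator Bk (fun _ => (1 : ℝ)) | F k]) ω ∂μ
      = ∫ ω in S, Set.indicator Bk (fun _ => (1 : ℝ)) ω ∂μ :=
    setIntegral_condExp (F.le k) hint hS
  have h2 : ∫ ω in S, Set.indicator Bk (fun _ => (1 : ℝ)) ω ∂μ = (μ (S ∩ Bk)).toReal := by
    rw [setIntegral_indicator hBm, setIntegral_const]
    simp
    rfl
  have h3 : ∫ ω in S, (μ[Set.indicator Bk (fun _ => (1 : ℝ)) | F k]) ω ∂μ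
      ≤ δ * (μ S).toReal := by
    calc ∫ ω in S, (μ[Set.indicator Bk (fun _ => (1 : ℝ)) | F k]) ω ∂μ
        ≤ ∫ _ω in S, δ ∂μ := by
          refine integral_mono_ae integrable_condExp.restrict (integrable_const δ) ?_
          exact ae_restrict_of_ae hc
      _ = δ * (μ S).toReal := by rw [setIntegral_const]; rw [smul_eq_mul, mul_comm]; rfl
  have hfin : μ (S ∩ Bk) ≠ ⊤ := measure_ne_top μ _
  have : (μ (S ∩ Bk)).toReal ≤ δ * (μ S).toReal := by
    rw [← h2, ← h1]; exact h3
  calc μ (S ∩ Bk) = ENNReal.ofReal ((μ (S ∩ Bk)).toReal) := (ENNReal.ofReal_toReal hfin).symm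
    _ ≤ ENNReal.ofReal (δ * (μ S).toReal) := ENNReal.ofReal_le_ofReal this
    _ = ENNReal.ofReal δ * ENNReal.ofReal ((μ S).toReal) := ENNReal.ofReal_mul hδ0
    _ = ENNReal.ofReal δ * μ S := by rw [ENNReal.ofReal_toReal (measure_ne_top μ _)]

lemma aux_chain {δ : ℝ} (hδ0 : 0 ≤ δ) {K : ℕ} {B : ℕ → Set Ω}
    (hmeas : ∀ k < K, MeasurableSet[F (k + 2)] (B k))
    (hcond : ∀ k < K,
      (μ[Set.indicator (B k) (fun _ => (1 : ℝ)) | F k]) ≤ᵐ[μ] fun _ => δ)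
    (s : Finset ℕ) (hlt : ∀ k ∈ s, k < K)
    (hgap : ∀ a ∈ s, ∀ b ∈ s, a < b → a + 2 ≤ b) :
    μ (⋂ k ∈ s, B k) ≤ ENNReal.ofReal δ ^ s.card := by
  induction s using Finset.strongInduction with
  | _ s ih =>
    rcases s.eq_empty_or_nonempty with rfl | hne
    · simp
    · set M := s.max' hne with hM
      have hMs : M ∈ s := s.max'_mem hne
      have hmemS : ∀ k ∈ s.erase M, k + 2 ≤ M := by
        intro k hk
        have hks : k ∈ s := Finset.mem_of_mem_erase hk
        have hkM : k < M := lt_of_le_of_ne (s.le_max' k hks) (Finset.ne_of_mem_erase hk)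
        exact hgap k hks M hMs hkM
      have hSmeas : MeasurableSet[F M] (⋂ k ∈ s.erase M, B k) := by
        refine Finset.measurableSet_biInter _ (fun k hk => ?_)
        exact F.mono (hmemS k hk) _ (hmeas k (hlt k (Finset.mem_of_mem_erase hk)))
      have hsplit : (⋂ k ∈ s, B k) = (⋂ k ∈ s.erase M, B k) ∩ B M := by
        conv_lhs => rw [← Finset.insert_erase hMs, Finset.set_biInter_insert, Set.inter_comm]
      have hstep := aux_cond_step μ F hδ0 (hmeas M (hlt M hMs)) (hcond M (hlt M hMs)) hSmeas
      have hrec := ih (s.erase M) (Finset.erase_ssubset hMs)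
        (fun k hk => hlt k (Finset.mem_of_mem_erase hk))
        (fun a ha b hb => hgap a (Finset.mem_of_mem_erase ha) b (Finset.mem_of_mem_erase hb))
      have hcard : s.card = (s.erase M).card + 1 := by
        rw [Finset.card_erase_of_mem hMs]
        have := Finset.card_pos.mpr hne
        omega
      calc μ (⋂ k ∈ s, B k) = μ ((⋂ k ∈ s.erase M, B k) ∩ B M) := by rw [hsplit]
        _ ≤ ENNReal.ofReal δ * μ (⋂ k ∈ s.erase M, B k) := hstep
        _ ≤ ENNReal.ofReal δ * ENNReal.ofReal δ ^ (s.erase M).card :=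
            mul_le_mul_right hrec _
        _ = ENNReal.ofReal δ ^ s.card := by rw [hcard, pow_succ, mul_comm]

open Classical in
lemma aux_count {δ : ℝ} (hδ0 : 0 ≤ δ) {K : ℕ} {B : ℕ → Set Ω}
    (hmeas : ∀ k < K, MeasurableSet[F (k + 2)] (B k))
    (hcond : ∀ k < K,
      (μ[Set.indicator (B k) (fun _ => (1 : ℝ)) | F k]) ≤ᵐ[μ] fun _ => δ)
    (T : Finset ℕ) (hlt : ∀ k ∈ T, k < K)
    (hgap : ∀ a ∈ T, ∀ b ∈ T, a < b → a + 2 ≤ b) (r N : ℕ) (hN : T.card ≤ N) :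
    μ {ω | r ≤ (T.filter fun k => ω ∈ B k).card} ≤ (N : ENNReal) ^ r * ENNReal.ofReal δ ^ r := by
  have hsub : {ω | r ≤ (T.filter fun k => ω ∈ B k).card}
      ⊆ ⋃ s ∈ T.powersetCard r, ⋂ k ∈ s, B k := by
    intro ω hω
    obtain ⟨t, hts, htcard⟩ := Finset.exists_subset_card_eq hω
    refine Set.mem_biUnion (Finset.mem_powersetCard.mpr ⟨hts.trans (Finset.filter_subset _ _), htcard⟩) ?_
    exact Set.mem_biInter fun k hk => (Finset.mem_filter.mp (hts hk)).2
  calc μ {ω | r ≤ (T.filter fun k => ω ∈ B k).card}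
      ≤ μ (⋃ s ∈ T.powersetCard r, ⋂ k ∈ s, B k) := measure_mono hsub
    _ ≤ ∑ s ∈ T.powersetCard r, μ (⋂ k ∈ s, B k) := measure_biUnion_finset_le _ _
    _ ≤ ∑ _s ∈ T.powersetCard r, ENNReal.ofReal δ ^ r := by
        refine Finset.sum_le_sum fun s hs => ?_
        obtain ⟨hsT, hcard⟩ := Finset.mem_powersetCard.mp hs
        rw [← hcard]
        exact aux_chain μ F hδ0 hmeas hcond s (fun k hk => hlt k (hsT hk))
          (fun a ha b hb => hgap a (hsT ha) b (hsT hb))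
    _ = ((T.powersetCard r).card : ENNReal) * ENNReal.ofReal δ ^ r := by
        rw [Finset.sum_const, nsmul_eq_mul]
    _ ≤ (N : ENNReal) ^ r * ENNReal.ofReal δ ^ r := by
        refine mul_le_mul_left ?_ _
        rw [Finset.card_powersetCard]
        exact_mod_cast Nat.cast_le.mpr ((Nat.choose_le_pow _ _).trans (Nat.pow_le_pow_left hN r))

end Aux


open Classical in
/-- The counting argument in Lemma 5: if each event `Bᵏ` is `F_{k+2}`-measurable and
`P(Bᵏ | F_k) ≤ δ` a.s., then `P(#{k < K : Bᵏ} > 2j) ≤ 4 (⌈K/2⌉ δ)^j`. -/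
theorem dominated_events_count {Ω : Type*} {m0 : MeasurableSpace Ω}
    (μ : Measure Ω) [IsProbabilityMeasure μ]
    (F : Filtration ℕ m0) (K : ℕ) (δ : ℝ) (hδ0 : 0 ≤ δ) (hδ1 : δ ≤ 1)
    (B : ℕ → Set Ω)
    (hmeas : ∀ k < K, MeasurableSet[F (k + 2)] (B k))
    (hcond : ∀ k < K,
      (μ[Set.indicator (B k) (fun _ => (1 : ℝ)) | F k]) ≤ᵐ[μ] fun _ => δ) :
    ∀ j : ℕ,
      μ {ω | 2 * j < ((Finset.range K).filter fun k => ω ∈ B k).card} ≤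
        ENNReal.ofReal (4 * ((⌈(K : ℝ) / 2⌉₊ : ℝ) * δ) ^ j) := by
  intro j
  classical
  set M := ⌈(K : ℝ) / 2⌉₊ with hMdef
  have h0 : (0 : ℝ) ≤ (M : ℝ) * δ := mul_nonneg (Nat.cast_nonneg _) hδ0
  have hK2M : K ≤ 2 * M := by
    have h := Nat.le_ceil ((K : ℝ) / 2)
    have h2 : (K : ℝ) ≤ 2 * M := by
      rw [hMdef]; linarith
    exact_mod_cast h2
  by_cases hsmall : (M : ℝ) * δ < 1
  · -- main case
    set Te := (Finset.range K).filter (fun k => k % 2 = 0) with hTe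
    set To := (Finset.range K).filter (fun k => k % 2 = 1) with hTo
    have hTelt : ∀ k ∈ Te, k < K := fun k hk => Finset.mem_range.mp (Finset.mem_of_mem_filter k hk)
    have hTolt : ∀ k ∈ To, k < K := fun k hk => Finset.mem_range.mp (Finset.mem_of_mem_filter k hk)
    have hTegap : ∀ a ∈ Te, ∀ b ∈ Te, a < b → a + 2 ≤ b := by
      intro a ha b hb hab
      have ha' := (Finset.mem_filter.mp ha).2
      have hb' := (Finset.mem_filter.mp hb).2
      omega
    have hTogap : ∀ a ∈ To, ∀ b ∈ To, a < b → a + 2 ≤ b := by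
      intro a ha b hb hab
      have ha' := (Finset.mem_filter.mp ha).2
      have hb' := (Finset.mem_filter.mp hb).2
      omega
    have hTecard : Te.card ≤ M := by
      have hsub : Te ⊆ Finset.image (fun i => 2 * i) (Finset.range M) := by
        intro k hk
        have h1 := Finset.mem_range.mp (Finset.mem_of_mem_filter k hk)
        have h2 := (Finset.mem_filter.mp hk).2
        simp only [Finset.mem_image, Finset.mem_range]
        exact ⟨k / 2, by omega, by omega⟩
      calc Te.card ≤ _ := Finset.card_le_card hsub
        _ ≤ (Finset.range M).card := Finset.card_image_le
        _ = M := Finset.card_range M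
    have hTocard : To.card ≤ M := by
      have hsub : To ⊆ Finset.image (fun i => 2 * i + 1) (Finset.range M) := by
        intro k hk
        have h1 := Finset.mem_range.mp (Finset.mem_of_mem_filter k hk)
        have h2 := (Finset.mem_filter.mp hk).2
        simp only [Finset.mem_image, Finset.mem_range]
        exact ⟨k / 2, by omega, by omega⟩
      calc To.card ≤ _ := Finset.card_le_card hsub
        _ ≤ (Finset.range M).card := Finset.card_image_le
        _ = M := Finset.card_range M
    have hsubset : {ω | 2 * j < ((Finset.range K).filter fun k => ω ∈ B k).card}
        ⊆ {ω | j + 1 ≤ (Te.filter fun k => ω ∈ B k).card}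
          ∪ {ω | j + 1 ≤ (To.filter fun k => ω ∈ B k).card} := by
      intro ω hω
      have hω' : 2 * j < ((Finset.range K).filter fun k => ω ∈ B k).card := hω
      have hsplit : ((Finset.range K).filter fun k => ω ∈ B k)
          = (Te.filter fun k => ω ∈ B k) ∪ (To.filter fun k => ω ∈ B k) := by
        ext k
        simp only [hTe, hTo, Finset.mem_union, Finset.mem_filter, Finset.mem_range]
        have := Nat.mod_two_eq_zero_or_one k
        tauto
      have hcard : ((Finset.range K).filter fun k => ω ∈ B k).card
          ≤ (Te.filter fun k => ω ∈ B k).card + (To.filter fun k => ω ∈ B k).card := by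
        rw [hsplit]; exact Finset.card_union_le _ _
      by_contra hcon
      simp only [Set.mem_union, Set.mem_setOf_eq, not_or, not_le] at hcon
      omega
    have hbound1 := aux_count μ F hδ0 hmeas hcond Te hTelt hTegap (j + 1) M hTecard
    have hbound2 := aux_count μ F hδ0 hmeas hcond To hTolt hTogap (j + 1) M hTocard
    have key : (M : ENNReal) ^ (j + 1) * ENNReal.ofReal δ ^ (j + 1)
        = ENNReal.ofReal (((M : ℝ) * δ) ^ (j + 1)) := by
      rw [ENNReal.ofReal_pow h0, ENNReal.ofReal_mul (Nat.cast_nonneg M),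
        ENNReal.ofReal_natCast, mul_pow]
    have hreal : ((M : ℝ) * δ) ^ (j + 1) + ((M : ℝ) * δ) ^ (j + 1)
        ≤ 4 * ((M : ℝ) * δ) ^ j := by
      have hp : ((M : ℝ) * δ) ^ (j + 1) ≤ ((M : ℝ) * δ) ^ j :=
        pow_le_pow_of_le_one h0 hsmall.le (by omega)
      have hnn : 0 ≤ ((M : ℝ) * δ) ^ j := pow_nonneg h0 j
      linarith
    calc μ {ω | 2 * j < ((Finset.range K).filter fun k => ω ∈ B k).card}
        ≤ μ ({ω | j + 1 ≤ (Te.filter fun k => ω ∈ B k).card}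
            ∪ {ω | j + 1 ≤ (To.filter fun k => ω ∈ B k).card}) := measure_mono hsubset
      _ ≤ μ {ω | j + 1 ≤ (Te.filter fun k => ω ∈ B k).card}
          + μ {ω | j + 1 ≤ (To.filter fun k => ω ∈ B k).card} := measure_union_le _ _
      _ ≤ ENNReal.ofReal (((M : ℝ) * δ) ^ (j + 1))
          + ENNReal.ofReal (((M : ℝ) * δ) ^ (j + 1)) := by
          rw [← key]; exact add_le_add hbound1 hbound2
      _ = ENNReal.ofReal (((M : ℝ) * δ) ^ (j + 1) + ((M : ℝ) * δ) ^ (j + 1)) :=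
          (ENNReal.ofReal_add (pow_nonneg h0 _) (pow_nonneg h0 _)).symm
      _ ≤ ENNReal.ofReal (4 * ((M : ℝ) * δ) ^ j) := ENNReal.ofReal_le_ofReal hreal
  · -- trivial case: M * δ ≥ 1
    push_neg at hsmall
    have h1 : (1 : ℝ) ≤ 4 * ((M : ℝ) * δ) ^ j := by
      have := one_le_pow₀ hsmall (n := j)
      linarith
    calc μ {ω | 2 * j < ((Finset.range K).filter fun k => ω ∈ B k).card}
        ≤ 1 := prob_le_one
      _ ≤ ENNReal.ofReal (4 * ((M : ℝ) * δ) ^ j) := by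
          rw [← ENNReal.ofReal_one]; exact ENNReal.ofReal_le_ofReal h1
end

section
/- Let (E, R) be a coupling of an ε-excited random walk E started from (∅, w) and a simple random walk R started at w such that for every n: E(n)₂ = R(n)₂, the difference D(n) := E(n)₁ − R(n)₁ is nonnegative and nondecreasing, and D(n+1) − D(n) ∈ {0, 2}. Then, deterministically on this coupling: whenever R has a tan point at time j relative to 0 (that is, {R(k) : 0 ≤ k ≤ j−1} does not intersect {R(j) + (t,0) : t = 0, 1, 2, …}), the excited walk is at a fresh site at time j, i.e., E(j) ∉ {E(0), …, E(j−1)}. -/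
open MeasureTheory ProbabilityTheory Filter Set

/-- If `e k = e j`, then `r k` has the height of `r j`, and since `e₁ - r₁` has not decreased
from `k` to `j`, `r k` lies on the half line `r j + ℕ × {0}`. -/
theorem TanPoint.apply_ne {e r : ℕ → ℤ × ℤ} (h2 : ∀ n, (e n).2 = (r n).2)
    (hD : Monotone fun n => (e n).1 - (r n).1) {i j : ℕ} (htan : TanPoint r i j) {k : ℕ}
    (hik : i ≤ k) (hkj : k < j) : e k ≠ e j := by
  intro heq
  refine htan k hik hkj ((r k).1 - (r j).1).toNat (Prod.ext ?_ ?_)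
  · have hoffset := hD hkj.le
    have hfst := congrArg Prod.fst heq
    simp only [Prod.fst_add] at hoffset hfst ⊢
    omega
  · simp [← h2, heq]

theorem tan_point_gives_fresh_site_general {Ω : Type*}
    (E R : ℕ → Ω → ℤ × ℤ)
    (h2 : ∀ n ω, (E n ω).2 = (R n ω).2)
    (hmono : ∀ n ω, (E n ω).1 - (R n ω).1 ≤ (E (n + 1) ω).1 - (R (n + 1) ω).1) :
    ∀ (ω : Ω) (j : ℕ), TanPoint (fun k => R k ω) 0 j →
      ∀ k < j, E k ω ≠ E j ω := by
  intro ω j htan k hkj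
  exact htan.apply_ne (fun n => h2 n ω) (monotone_nat_of_le_succ fun n => hmono n ω)
    k.zero_le hkj

/-- **Tan points yield fresh sites.** Let `(E, R)` be a coupling of an `ε`-excited
random walk `E` started from `(∅, w)` and a simple random walk `R` started at `w`,
such that the second coordinates agree and `D n = E(n)₁ - R(n)₁` is nonnegative,
nondecreasing, with increments in `{0, 2}`. Then deterministically: whenever `R` has a
tan point at time `j` relative to `0`, the excited walk is at a fresh site at time
`j`. -/
theorem tan_point_gives_fresh_site {Ω : Type*} [MeasurableSpace Ω]
    (μ : Measure Ω) [IsProbabilityMeasure μ] (ε : ℝ) (w : ℤ × ℤ)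
    (E R : ℕ → Ω → ℤ × ℤ)
    (hE : IsExcitedRW μ ε ∅ w E) (hR : IsSRW μ w R)
    (h2 : ∀ n ω, (E n ω).2 = (R n ω).2)
    (hpos : ∀ n ω, 0 ≤ (E n ω).1 - (R n ω).1)
    (hmono : ∀ n ω, (E n ω).1 - (R n ω).1 ≤ (E (n + 1) ω).1 - (R (n + 1) ω).1)
    (hjump : ∀ n ω,
      ((E (n + 1) ω).1 - (R (n + 1) ω).1) - ((E n ω).1 - (R n ω).1) = 0 ∨
      ((E (n + 1) ω).1 - (R (n + 1) ω).1) - ((E n ω).1 - (R n ω).1) = 2) :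
    ∀ (ω : Ω) (j : ℕ), TanPoint (fun k => R k ω) 0 j →
      ∀ k < j, E k ω ≠ E j ω :=
  tan_point_gives_fresh_site_general E R h2 hmono
end
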